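/- arXiv:1805.05900 — 2 statements merged into one kernel-verified Lean document; each statement's English description precedes it below -/
import Mathlib

section
/- Let G be a 2-ichromatic ordered graph with parts v_1, ..., v_m and v_{m+1}, ..., v_{m+n}, and suppose that v_1 v_{m+1}, v_m v_{m+n}, and v_m v_{m+1} are edges of G. Then R(G) ≥ 5r + 1, where r = min(m,n) - 1. -/
/-- A `t`-edge-coloring `c` of the complete graph on the ordered vertex set `Fin N`
contains a monochromatic ordered copy of the ordered graph `G` on `Fin M`. -/
def HasMonoCopy {M N t : ℕ} (G : SimpleGraph (Fin M)) (c : Fin N → Fin N → Fin t) : Prop :=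
  ∃ k : Fin t, ∃ f : Fin M → Fin N, StrictMono f ∧
    ∀ u v : Fin M, u < v → G.Adj u v → c (f u) (f v) = k

/-- The `t`-color ordered Ramsey number of the ordered graph `G`: the least `N` such that
every `t`-coloring of the edges of the complete graph on `Fin N` contains a monochromatic
ordered copy of `G`. -/
noncomputable def orderedRamsey {M : ℕ} (t : ℕ) (G : SimpleGraph (Fin M)) : ℕ :=
  sInf {N : ℕ | ∀ c : Fin N → Fin N → Fin t, HasMonoCopy G c}

/-- An interval coloring of an ordered graph with `k` parts, encoded as a monotone
surjection onto `Fin k` whose fibers (the parts, which are intervals of consecutive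
vertices) are independent sets. -/
def IsIntervalColoring {N k : ℕ} (G : SimpleGraph (Fin N)) (p : Fin N → Fin k) : Prop :=
  Monotone p ∧ Function.Surjective p ∧ ∀ u v : Fin N, G.Adj u v → p u ≠ p v

/-- The interval chromatic number of an ordered graph. -/
noncomputable def intervalChromatic {N : ℕ} (G : SimpleGraph (Fin N)) : ℕ :=
  sInf {k : ℕ | ∃ p : Fin N → Fin k, IsIntervalColoring G p}

/-!
Cut `{0, …, 5r - 1}` into five consecutive blocks of length `r` and colour an edge by the pair of
blocks containing its endpoints, according to a fixed table on `Fin 5`. The edges `v_1 v_{m+1}`,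
`v_m v_{m+1}`, `v_m v_{m+n}` have the shape `ac, bc, bd` with `a < b < c < d`, and in an ordered
copy `a, b` are at least `m - 1 ≥ r` apart, as are `c, d`; so their blocks satisfy `A < B ≤ C < D`,
and the table admits no such pattern with `AC, BC, BD` of one colour.
-/

open Finset

theorem exists_strictMono_color_eq_left_of_two_pow_le {β : Type*} [LinearOrder β]
    (c : β → β → Fin 2) (k : ℕ) (S : Finset β) (hS : 2 ^ k ≤ #S) :
    ∃ (f : Fin k → β) (b : Fin k → Fin 2),
      StrictMono f ∧ (∀ i, f i ∈ S) ∧ ∀ i j, i < j → c (f i) (f j) = b i := by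
  induction k generalizing S with
  | zero => exact ⟨finZeroElim, finZeroElim, fun i => i.elim0, fun i => i.elim0,
      fun i => i.elim0⟩
  | succ k ih =>
    have hS₀ : S.Nonempty := card_pos.mp (lt_of_lt_of_le (by positivity) hS)
    set a := S.min' hS₀
    obtain ⟨col, -, hcol⟩ := exists_lt_card_fiber_of_mul_lt_card_of_maps_to
      (s := S.erase a) (t := univ) (f := c a) (n := 2 ^ k - 1) (fun _ _ => mem_univ _)
      (by rw [card_erase_of_mem (S.min'_mem hS₀), card_univ, Fintype.card_fin]
          have := Nat.one_le_two_pow (n := k); rw [pow_succ] at hS; omega)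
    obtain ⟨f, b, hf, hfS, hfb⟩ := ih {x ∈ S.erase a | c a x = col} (by omega)
    have hfS' (i : Fin k) : f i ∈ S.erase a := (mem_filter.mp (hfS i)).1
    refine ⟨Fin.cons a f, Fin.cons col b,
      Fin.strictMono_cons.mpr ⟨fun j => S.min'_lt_of_mem_erase_min' hS₀ (hfS' j), hf⟩,
      Fin.cases (S.min'_mem hS₀) fun i => mem_of_mem_erase (hfS' i), ?_⟩
    intro i j hij
    cases i using Fin.cases with
    | zero =>
      cases j using Fin.cases with
      | zero => exact absurd hij (lt_irrefl 0)
      | succ j => exact (mem_filter.mp (hfS j)).2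
    | succ i =>
      cases j using Fin.cases with
      | zero => exact absurd hij (Fin.succ_pos i).not_gt
      | succ j => exact hfb i j (Fin.succ_lt_succ_iff.mp hij)

theorem hasMonoCopy_of_two_pow_le {M N : ℕ} (G : SimpleGraph (Fin M)) (hN : 2 ^ (2 * M) ≤ N)
    (c : Fin N → Fin N → Fin 2) : HasMonoCopy G c := by
  obtain ⟨f, b, hf, -, hfb⟩ :=
    exists_strictMono_color_eq_left_of_two_pow_le c (2 * M) univ (by simpa using hN)
  obtain ⟨col, hcol⟩ := Fintype.exists_le_card_fiber_of_mul_le_card (f := b) (n := M) (by simp)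
  set e := orderEmbOfCardLe _ hcol
  refine ⟨col, f ∘ e, hf.comp e.strictMono, fun u v huv _ => ?_⟩
  rw [Function.comp_apply, Function.comp_apply, hfb _ _ (e.strictMono huv)]
  exact (mem_filter.mp (orderEmbOfCardLe_mem _ hcol u)).2

-- `orderedRamsey` is an `sInf` in `ℕ`, so a lower bound needs some `N` in the set: hence the
-- crude upper bound `2 ^ (2 * M)`.
theorem le_orderedRamsey_two_of_forall_lt {M L : ℕ} (G : SimpleGraph (Fin M))
    (h : ∀ N < L, ∃ c : Fin N → Fin N → Fin 2, ¬ HasMonoCopy G c) : L ≤ orderedRamsey 2 G :=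
  le_csInf ⟨_, hasMonoCopy_of_two_pow_le G le_rfl⟩ fun N hN =>
    not_lt.mp fun hlt => (h N hlt).elim fun c hc => hc (hN c)

theorem StrictMono.val_add_le_of_val_add_le {M N d : ℕ} {f : Fin M → Fin N} (hf : StrictMono f)
    {i j : Fin M} (hij : (i : ℕ) + d ≤ j) : (f i : ℕ) + d ≤ f j := by
  have hcard := card_le_card_of_injOn f (s := Icc i j) (t := Icc (f i) (f j))
    (fun x hx => by
      obtain ⟨hix, hxj⟩ := mem_Icc.mp hx
      exact mem_Icc.mpr ⟨hf.monotone hix, hf.monotone hxj⟩)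
    hf.injective.injOn
  simp only [Fin.card_Icc] at hcard
  omega

def fiveBlockColor (i j : ℕ) : Fin 2 :=
  if (i, j) ∈ [(1, 1), (1, 3), (1, 4), (2, 2), (2, 4), (3, 4)] then 1 else 0

theorem fiveBlockColor_no_path (a b c d : Fin 5) (hab : a < b) (hbc : b ≤ c) (hcd : c < d)
    (hacbc : fiveBlockColor a c = fiveBlockColor b c) :
    fiveBlockColor b d ≠ fiveBlockColor b c := by
  revert a b c d
  decide

def blockColoring (r N : ℕ) (x y : Fin N) : Fin 2 :=
  fiveBlockColor (x / r) (y / r)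

theorem not_hasMonoCopy_blockColoring {M N r : ℕ} (G : SimpleGraph (Fin M)) (hN : N ≤ 5 * r)
    {a b c d : Fin M} (hab : (a : ℕ) + r ≤ b) (hbc : b < c) (hcd : (c : ℕ) + r ≤ d)
    (hGac : G.Adj a c) (hGbc : G.Adj b c) (hGbd : G.Adj b d) :
    ¬ HasMonoCopy G (blockColoring r N) := by
  rintro ⟨k, f, hf, hfk⟩
  have hr : 0 < r := by have := (f a).pos; omega
  rw [Fin.lt_def] at hbc
  have block (x : Fin N) : (x : ℕ) / r < 5 := Nat.div_lt_of_lt_mul (by omega)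
  have gap {x y : Fin M} (hxy : (x : ℕ) + r ≤ y) : (f x : ℕ) / r < f y / r := by
    have := hf.val_add_le_of_val_add_le hxy
    rw [Nat.lt_iff_add_one_le, Nat.le_div_iff_mul_le hr]
    nlinarith [Nat.div_mul_le_self (f x) r]
  have hcolor {x y : Fin M} (hxy : (x : ℕ) < y) (hadj : G.Adj x y) :
      fiveBlockColor (f x / r) (f y / r) = k := hfk x y hxy hadj
  exact fiveBlockColor_no_path ⟨_, block (f a)⟩ ⟨_, block (f b)⟩ ⟨_, block (f c)⟩
    ⟨_, block (f d)⟩ (Fin.mk_lt_mk.mpr (gap hab))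
    (Fin.mk_le_mk.mpr (Nat.div_le_div_right (hf (Fin.lt_def.mpr hbc)).le))
    (Fin.mk_lt_mk.mpr (gap hcd))
    ((hcolor (by omega) hGac).trans (hcolor hbc hGbc).symm)
    ((hcolor (by omega) hGbd).trans (hcolor hbc hGbc).symm)

/-- If `G` is a 2-ichromatic ordered graph with parts `v_1,…,v_m` and
`v_{m+1},…,v_{m+n}` having edges `v_1 v_{m+1}`, `v_m v_{m+n}`, and `v_m v_{m+1}`,
then `R(G) ≥ 5r + 1` where `r = min(m,n) - 1`. -/
theorem stmt2 {m n : ℕ} (hm : 1 ≤ m) (hn : 1 ≤ n)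
    (G : SimpleGraph (Fin (m + n)))
    (hedge1 : G.Adj ⟨0, by omega⟩ ⟨m, by omega⟩)
    (hedge2 : G.Adj ⟨m - 1, by omega⟩ ⟨m + n - 1, by omega⟩)
    (hedge3 : G.Adj ⟨m - 1, by omega⟩ ⟨m, by omega⟩) :
    5 * (min m n - 1) + 1 ≤ orderedRamsey 2 G := by
  exact le_orderedRamsey_two_of_forall_lt G fun N hN =>
    ⟨blockColoring (min m n - 1) N, not_hasMonoCopy_blockColoring G (by omega)
      (by simp only; omega) (by simp only [Fin.mk_lt_mk]; omega) (by simp only; omega)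
      hedge1 hedge3 hedge2⟩
end

section
/- Let m, n ≥ 2 and let G be the ordered graph on vertices v_1, ..., v_{m+n} whose only edges are v_1 v_{m+n} and v_m v_{m+1}. Color the edges of the complete graph on the linearly ordered vertex set {1, ..., 2m+2n-3} by making an edge red if it has an endpoint among the first m-1 vertices or among the last n-1 vertices, and blue otherwise. Then this coloring contains no monochromatic ordered copy of G; consequently R(G) > 2m + 2n - 3. -/
/-!
An ordered copy of `G` in `Fin N` has its long edge `v₁ v_{m+n}` spanning at least `m + n - 1`
steps and its short edge `v_m v_{m+1}` at least `m - 1` steps from the left end and `n - 1`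
from the right one. With `N = 2m + 2n - 3`, the short edge is thus squeezed into the blue
middle block, while the long edge must reach into one of the red borders.

The lower bound on `orderedRamsey` also needs some `N` that forces a copy (otherwise `sInf` is
the junk value `0`); `N = 2m + 2n - 2` does. Let `k` be the colour of the edge `(0, N - 1)`.
Either some edge of colour `k` lies in the window `[m - 1, 2m + n - 2]` and serves as
`v_m v_{m+1}`, with `v₁`, `v_{m+n}` mapped to `0` and `N - 1`, or the window, which has exactly
`m + n` vertices, has no edge of colour `k` and is a copy in the other colour.
-/

section
variable {M N t : ℕ}

open Finset in
theorem StrictMono.val_add_sub_le {f : Fin M → Fin N} (hf : StrictMono f) {i j : Fin M}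
    (hij : i ≤ j) : (f i : ℕ) + (j - i) ≤ f j := by
  have hcard := card_le_card_of_injOn f (s := Icc i j) (t := Icc (f i) (f j))
    (fun x hx => by
      simp only [coe_Icc, Set.mem_Icc] at hx ⊢
      exact ⟨hf.monotone hx.1, hf.monotone hx.2⟩) hf.injective.injOn
  simp only [Fin.card_Icc] at hcard
  have := hf.monotone hij
  rw [Fin.le_def] at this
  omega

theorem HasMonoCopy.of_castLE {G : SimpleGraph (Fin M)} {N' : ℕ} (h : N ≤ N')
    {c : Fin N' → Fin N' → Fin t}
    (hc : HasMonoCopy G fun i j => c (Fin.castLE h i) (Fin.castLE h j)) :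
    HasMonoCopy G c :=
  let ⟨k, f, hf, hcol⟩ := hc
  ⟨k, Fin.castLE h ∘ f, (Fin.strictMono_castLE h).comp hf, hcol⟩

theorem lt_orderedRamsey_of_not_hasMonoCopy {G : SimpleGraph (Fin M)} {N₀ : ℕ}
    (hN₀ : ∀ c : Fin N₀ → Fin N₀ → Fin t, HasMonoCopy G c) {c : Fin N → Fin N → Fin t}
    (hc : ¬ HasMonoCopy G c) : N < orderedRamsey t G := by
  refine le_csInf ⟨N₀, ?_⟩ fun N' hN' =>
    not_lt.1 fun h => hc (.of_castLE (Nat.le_of_lt_succ h) (hN' _))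
  exact hN₀

theorem hasMonoCopy_fromEdgeSet_pair_iff {a b a' b' : Fin M} (hab : a < b) (hab' : a' < b')
    (c : Fin N → Fin N → Fin t) :
    HasMonoCopy (SimpleGraph.fromEdgeSet {s(a, b), s(a', b')}) c ↔
      ∃ f : Fin M → Fin N, StrictMono f ∧ c (f a) (f b) = c (f a') (f b') := by
  constructor
  · rintro ⟨k, f, hf, hcol⟩
    refine ⟨f, hf, ?_⟩
    rw [hcol a b hab (by simp [hab.ne]), hcol a' b' hab' (by simp [hab'.ne])]
  · rintro ⟨f, hf, heq⟩
    refine ⟨c (f a) (f b), f, hf, fun u v huv hadj => ?_⟩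
    simp only [SimpleGraph.fromEdgeSet_adj, Set.mem_insert_iff, Set.mem_singleton_iff,
      Sym2.eq_iff] at hadj
    obtain (⟨rfl, rfl⟩ | ⟨rfl, rfl⟩) | (⟨rfl, rfl⟩ | ⟨rfl, rfl⟩) := hadj.1
    · rfl
    · exact absurd huv hab.not_gt
    · exact heq.symm
    · exact absurd huv hab'.not_gt

end

section
variable {m n : ℕ} {a b a' b' : Fin (m + n)}

theorem border_coloring_color_ne (c : Fin (2 * m + 2 * n - 3) → Fin (2 * m + 2 * n - 3) → Fin 2)
    (hc : ∀ i j : Fin (2 * m + 2 * n - 3),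
      c i j = if (i : ℕ) < m - 1 ∨ (j : ℕ) < m - 1 ∨
        2 * m + n - 2 ≤ (i : ℕ) ∨ 2 * m + n - 2 ≤ (j : ℕ) then 0 else 1)
    (ha : (a : ℕ) = 0) (hb : (b : ℕ) = m + n - 1) (ha' : (a' : ℕ) = m - 1) (hb' : (b' : ℕ) = m)
    {f : Fin (m + n) → Fin (2 * m + 2 * n - 3)} (hf : StrictMono f) :
    c (f a) (f b) ≠ c (f a') (f b') := by
  have h₁ := hf.val_add_sub_le (i := a) (j := a') (by rw [Fin.le_def]; omega)
  have h₂ := hf.val_add_sub_le (i := a') (j := b') (by rw [Fin.le_def]; omega)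
  have h₃ := hf.val_add_sub_le (i := b') (j := b) (by rw [Fin.le_def]; omega)
  have h₄ := (f b).isLt
  rw [hc, hc]
  split_ifs <;> omega

theorem exists_strictMono_color_eq (hm : 2 ≤ m) (hn : 2 ≤ n)
    (c : Fin (2 * m + 2 * n - 2) → Fin (2 * m + 2 * n - 2) → Fin 2)
    (ha : (a : ℕ) = 0) (hb : (b : ℕ) = m + n - 1) (ha' : (a' : ℕ) = m - 1) (hb' : (b' : ℕ) = m) :
    ∃ f : Fin (m + n) → Fin (2 * m + 2 * n - 2),
      StrictMono f ∧ c (f a) (f b) = c (f a') (f b') := by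
  set k := c ⟨0, by omega⟩ ⟨2 * m + 2 * n - 3, by omega⟩
  by_cases h : ∃ u v : Fin (2 * m + 2 * n - 2),
      m - 1 ≤ (u : ℕ) ∧ u < v ∧ (v : ℕ) ≤ 2 * m + n - 2 ∧ c u v = k
  · obtain ⟨u, v, hu, huv, hv, hcuv⟩ := h
    rw [Fin.lt_def] at huv
    let f (i : Fin (m + n)) : Fin (2 * m + 2 * n - 2) :=
      ⟨if (i : ℕ) = 0 then 0 else if (i : ℕ) = m + n - 1 then 2 * m + 2 * n - 3
        else if (i : ℕ) < m then u + i - (m - 1) else v + (i - m), by split_ifs <;> omega⟩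
    refine ⟨f, fun i j hij => ?_, ?_⟩
    · rw [Fin.lt_def] at hij ⊢
      have := j.isLt
      simp only [f]
      split_ifs <;> omega
    · have hfa : f a = ⟨0, by omega⟩ := Fin.ext (by simp only [f, ha]; split_ifs <;> omega)
      have hfb : f b = ⟨2 * m + 2 * n - 3, by omega⟩ :=
        Fin.ext (by simp only [f, hb]; split_ifs <;> omega)
      have hfa' : f a' = u := Fin.ext (by simp only [f, ha']; split_ifs <;> omega)
      have hfb' : f b' = v := Fin.ext (by simp only [f, hb']; split_ifs <;> omega)
      rw [hfa, hfb, hfa', hfb', hcuv]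
  · push Not at h
    let f (i : Fin (m + n)) : Fin (2 * m + 2 * n - 2) := ⟨m - 1 + i, by omega⟩
    have hf (i : Fin (m + n)) : (f i : ℕ) = m - 1 + i := rfl
    have hne (x y : Fin (m + n)) (hxy : x < y) : c (f x) (f y) ≠ k := by
      rw [Fin.lt_def] at hxy
      have := y.isLt
      exact h _ _ (by rw [hf]; omega) (by rw [Fin.lt_def, hf, hf]; omega) (by rw [hf]; omega)
    refine ⟨f, fun i j hij => by rw [Fin.lt_def] at hij ⊢; rw [hf, hf]; omega, ?_⟩
    have := hne a b (by rw [Fin.lt_def]; omega)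
    have := hne a' b' (by rw [Fin.lt_def]; omega)
    omega

end

/-- If `G` is the ordered graph on `v_1,…,v_{m+n}` whose only edges are `v_1 v_{m+n}`
and `v_m v_{m+1}`, then the coloring of the complete graph on `{1,…,2m+2n-3}` that
colors an edge red (`0`) iff it has an endpoint among the first `m-1` or the last
`n-1` vertices, and blue (`1`) otherwise, has no monochromatic ordered copy of `G`;
consequently `R(G) > 2m + 2n - 3`. -/
theorem stmt5 {m n : ℕ} (hm : 2 ≤ m) (hn : 2 ≤ n)
    (G : SimpleGraph (Fin (m + n)))
    (hG : G = SimpleGraph.fromEdgeSet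
      {s((⟨0, by omega⟩ : Fin (m + n)), (⟨m + n - 1, by omega⟩ : Fin (m + n))),
       s((⟨m - 1, by omega⟩ : Fin (m + n)), (⟨m, by omega⟩ : Fin (m + n)))})
    (c : Fin (2 * m + 2 * n - 3) → Fin (2 * m + 2 * n - 3) → Fin 2)
    (hc : ∀ i j : Fin (2 * m + 2 * n - 3),
      c i j = if (i : ℕ) < m - 1 ∨ (j : ℕ) < m - 1 ∨
        2 * m + n - 2 ≤ (i : ℕ) ∨ 2 * m + n - 2 ≤ (j : ℕ) then 0 else 1) :
    ¬ HasMonoCopy G c ∧ 2 * m + 2 * n - 3 < orderedRamsey 2 G := by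
  have hasMonoCopy_iff (N : ℕ) (c' : Fin N → Fin N → Fin 2) := hG ▸
    hasMonoCopy_fromEdgeSet_pair_iff (Fin.mk_lt_mk.2 (by omega)) (Fin.mk_lt_mk.2 (by omega)) c'
  have no_copy : ¬ HasMonoCopy G c := by
    rw [hasMonoCopy_iff]
    rintro ⟨f, hf, heq⟩
    exact border_coloring_color_ne c hc rfl rfl rfl rfl hf heq
  refine ⟨no_copy, lt_orderedRamsey_of_not_hasMonoCopy (N₀ := 2 * m + 2 * n - 2) ?_ no_copy⟩
  intro c'
  rw [hasMonoCopy_iff]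
  exact exists_strictMono_color_eq hm hn c' rfl rfl rfl rfl
end
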